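/- arXiv:1006.5852 — 6 statements merged into one kernel-verified Lean document; each statement's English description precedes it below -/
import Mathlib

section
/- Let T be an m×(n−m) complex matrix and define the n×n block matrix S with blocks S₁₁ = (I+TT†)⁻¹(I−TT†), S₁₂ = (I+TT†)⁻¹·2T, S₂₁ = (I+T†T)⁻¹·2T†, S₂₂ = −(I+T†T)⁻¹(I−T†T). Then S is unitary. -/
open Matrix

private lemma aux_intertwine {k l : Type*} [Fintype k] [Fintype l] [DecidableEq k] [DecidableEq l]
    (X : Matrix k l ℂ) (A : Matrix k k ℂ) (B : Matrix l l ℂ) (a : Matrix k k ℂ)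
    (b : Matrix l l ℂ) (hA : a * A = 1) (hB : B * b = 1) (h : X * B = A * X) :
    X * b = a * X := by
  calc X * b = (a * A) * (X * b) := by rw [hA, Matrix.one_mul]
    _ = a * ((X * B) * b) := by rw [h]; simp [Matrix.mul_assoc]
    _ = a * (X * (B * b)) := by simp [Matrix.mul_assoc]
    _ = a * X := by rw [hB, Matrix.mul_one]

/-- The scattering matrix S built from T is unitary. -/
theorem stmt_1 (n m : ℕ) (hm : 1 ≤ m) (hmn : m < n)
    (T : Matrix (Fin m) (Fin (n - m)) ℂ)
    (S : Matrix (Fin m ⊕ Fin (n - m)) (Fin m ⊕ Fin (n - m)) ℂ)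
    (hS : S = Matrix.fromBlocks
      ((1 + T * Tᴴ)⁻¹ * (1 - T * Tᴴ))
      ((1 + T * Tᴴ)⁻¹ * (2 • T))
      ((1 + Tᴴ * T)⁻¹ * (2 • Tᴴ))
      (-((1 + Tᴴ * T)⁻¹ * (1 - Tᴴ * T)))) :
    S * Sᴴ = 1 ∧ Sᴴ * S = 1 := by
  open ComplexOrder in
  set P : Matrix (Fin m) (Fin m) ℂ := T * Tᴴ with hP
  set Q : Matrix (Fin (n - m)) (Fin (n - m)) ℂ := Tᴴ * T with hQ
  have hPsd : P.PosSemidef := Matrix.posSemidef_self_mul_conjTranspose (R := ℂ) T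
  have hQsd : Q.PosSemidef := Matrix.posSemidef_conjTranspose_mul_self (R := ℂ) T
  have hApd : (1 + P).PosDef := Matrix.PosDef.add_posSemidef Matrix.PosDef.one hPsd
  have hBpd : (1 + Q).PosDef := Matrix.PosDef.add_posSemidef Matrix.PosDef.one hQsd
  letI : Invertible (1 + P) := hApd.isUnit.invertible
  letI : Invertible (1 + Q) := hBpd.isUnit.invertible
  have hainv : (1 + P)⁻¹ = ⅟(1 + P) := (invOf_eq_nonsing_inv _).symm
  have hbinv : (1 + Q)⁻¹ = ⅟(1 + Q) := (invOf_eq_nonsing_inv _).symm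
  set a : Matrix (Fin m) (Fin m) ℂ := ⅟(1 + P) with ha
  set b : Matrix (Fin (n - m)) (Fin (n - m)) ℂ := ⅟(1 + Q) with hb
  -- basic facts
  have ha1 : a * (1 + P) = 1 := invOf_mul_self _
  have ha2 : (1 + P) * a = 1 := mul_invOf_self _
  have hb1 : b * (1 + Q) = 1 := invOf_mul_self _
  have hb2 : (1 + Q) * b = 1 := mul_invOf_self _
  -- a commutes with P (and hence with 1 - P)
  have hcaP : a * P = P * a :=
    (Commute.invOf_left (((Commute.one_left P).add_left (Commute.refl P)))).eq
  have hcbQ : b * Q = Q * b :=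
    (Commute.invOf_left (((Commute.one_left Q).add_left (Commute.refl Q)))).eq
  have hca : a * (1 - P) = (1 - P) * a := by
    simp only [mul_sub, sub_mul, mul_one, one_mul, hcaP]
  have hcb : b * (1 - Q) = (1 - Q) * b := by
    simp only [mul_sub, sub_mul, mul_one, one_mul, hcbQ]
  -- intertwining
  have hTB : T * (1 + Q) = (1 + P) * T := by
    rw [hP, hQ, Matrix.mul_add, Matrix.add_mul, Matrix.mul_one, Matrix.one_mul,
      Matrix.mul_assoc]
  have hTHB : Tᴴ * (1 + P) = (1 + Q) * Tᴴ := by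
    rw [hP, hQ, Matrix.mul_add, Matrix.add_mul, Matrix.mul_one, Matrix.one_mul,
      Matrix.mul_assoc]
  have hTb : T * b = a * T := aux_intertwine T (1 + P) (1 + Q) a b ha1 hb2 hTB
  have hTHa : Tᴴ * a = b * Tᴴ := aux_intertwine Tᴴ (1 + Q) (1 + P) b a hb1 ha2 hTHB
  have hPT : (1 - P) * T = T * (1 - Q) := by
    rw [hP, hQ, Matrix.mul_sub, Matrix.sub_mul, Matrix.mul_one, Matrix.one_mul,
      Matrix.mul_assoc]
  have hTHP : Tᴴ * (1 - P) = (1 - Q) * Tᴴ := by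
    rw [hP, hQ, Matrix.mul_sub, Matrix.sub_mul, Matrix.mul_one, Matrix.one_mul,
      Matrix.mul_assoc]
  -- hermitian facts
  have haH : aᴴ = a := by
    rw [ha, invOf_eq_nonsing_inv, Matrix.conjTranspose_nonsing_inv, hApd.isHermitian.eq]
  have hbH : bᴴ = b := by
    rw [hb, invOf_eq_nonsing_inv, Matrix.conjTranspose_nonsing_inv, hBpd.isHermitian.eq]
  have hPH : Pᴴ = P := by rw [hP, Matrix.conjTranspose_mul, Matrix.conjTranspose_conjTranspose]
  have hQH : Qᴴ = Q := by rw [hQ, Matrix.conjTranspose_mul, Matrix.conjTranspose_conjTranspose]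
  -- rewrite S with a, b
  have hS' : S = Matrix.fromBlocks (a * (1 - P)) (a * (2 • T)) (b * (2 • Tᴴ))
      (-(b * (1 - Q))) := by
    rw [hS, hainv, hbinv]
  -- S is Hermitian
  have hHerm : Sᴴ = S := by
    rw [hS', Matrix.fromBlocks_conjTranspose, Matrix.fromBlocks_inj]
    refine ⟨?_, ?_, ?_, ?_⟩
    · rw [Matrix.conjTranspose_mul, Matrix.conjTranspose_sub, Matrix.conjTranspose_one,
        hPH, haH, hca]
    · simp only [Matrix.conjTranspose_mul, Matrix.conjTranspose_nsmul, haH, hbH,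
        Matrix.conjTranspose_conjTranspose, Matrix.smul_mul, Matrix.mul_smul, hTb]
    · simp only [Matrix.conjTranspose_mul, Matrix.conjTranspose_nsmul, haH, hbH,
        Matrix.smul_mul, Matrix.mul_smul, hTHa]
    · rw [Matrix.conjTranspose_neg, Matrix.conjTranspose_mul, Matrix.conjTranspose_sub,
        Matrix.conjTranspose_one, hQH, hbH, hcb]
  -- core product identities
  have c1 : a * (1 - P) * (a * (1 - P)) = a * a * ((1 - P) * (1 - P)) := by
    calc a * (1 - P) * (a * (1 - P)) = a * ((1 - P) * a) * (1 - P) := by noncomm_ring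
      _ = a * (a * (1 - P)) * (1 - P) := by rw [← hca]
      _ = a * a * ((1 - P) * (1 - P)) := by noncomm_ring
  have c2 : a * T * (b * Tᴴ) = a * a * P := by
    rw [Matrix.mul_assoc a T (b * Tᴴ), ← Matrix.mul_assoc T b Tᴴ, hTb,
      Matrix.mul_assoc a T Tᴴ, ← hP, ← Matrix.mul_assoc]
  have c3 : a * (1 - P) * (a * T) = a * a * (T * (1 - Q)) := by
    rw [Matrix.mul_assoc a (1 - P) (a * T), ← Matrix.mul_assoc (1 - P) a T, ← hca,
      Matrix.mul_assoc a (1 - P) T, hPT, ← Matrix.mul_assoc, ← Matrix.mul_assoc,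
      Matrix.mul_assoc (a * a) T (1 - Q)]
  have c4 : a * T * (b * (1 - Q)) = a * a * (T * (1 - Q)) := by
    rw [Matrix.mul_assoc a T (b * (1 - Q)), ← Matrix.mul_assoc T b (1 - Q), hTb,
      ← Matrix.mul_assoc, ← Matrix.mul_assoc, Matrix.mul_assoc (a * a) T (1 - Q)]
  have c5 : b * Tᴴ * (a * (1 - P)) = b * b * ((1 - Q) * Tᴴ) := by
    rw [Matrix.mul_assoc b Tᴴ (a * (1 - P)), ← Matrix.mul_assoc Tᴴ a (1 - P), hTHa,
      Matrix.mul_assoc b Tᴴ (1 - P), hTHP, ← Matrix.mul_assoc, ← Matrix.mul_assoc,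
      Matrix.mul_assoc (b * b) (1 - Q) Tᴴ]
  have c6 : b * (1 - Q) * (b * Tᴴ) = b * b * ((1 - Q) * Tᴴ) := by
    rw [Matrix.mul_assoc b (1 - Q) (b * Tᴴ), ← Matrix.mul_assoc (1 - Q) b Tᴴ, ← hcb,
      ← Matrix.mul_assoc, ← Matrix.mul_assoc, Matrix.mul_assoc (b * b) (1 - Q) Tᴴ]
  have c7 : b * Tᴴ * (a * T) = b * b * Q := by
    rw [Matrix.mul_assoc b Tᴴ (a * T), ← Matrix.mul_assoc Tᴴ a T, hTHa,
      Matrix.mul_assoc b Tᴴ T, ← hQ, ← Matrix.mul_assoc]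
  have c8 : b * (1 - Q) * (b * (1 - Q)) = b * b * ((1 - Q) * (1 - Q)) := by
    calc b * (1 - Q) * (b * (1 - Q)) = b * ((1 - Q) * b) * (1 - Q) := by noncomm_ring
      _ = b * (b * (1 - Q)) * (1 - Q) := by rw [← hcb]
      _ = b * b * ((1 - Q) * (1 - Q)) := by noncomm_ring
  -- main computation : S * S = 1
  have key : S * S = 1 := by
    rw [hS', Matrix.fromBlocks_multiply, ← Matrix.fromBlocks_one, Matrix.fromBlocks_inj]
    refine ⟨?_, ?_, ?_, ?_⟩
    · -- (1,1)
      simp only [Matrix.mul_smul, Matrix.smul_mul, smul_smul]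
      rw [c1, c2]
      have e : a * a * ((1 - P) * (1 - P)) + (2 * 2 : ℕ) • (a * a * P)
          = a * ((a * (1 + P)) * (1 + P)) := by
        simp only [nsmul_eq_mul, Nat.reduceMul, Nat.cast_ofNat]; noncomm_ring
      rw [e, ha1, Matrix.one_mul, ha1]
    · -- (1,2)
      simp only [Matrix.mul_smul, Matrix.smul_mul, smul_smul, Matrix.mul_neg,
        Matrix.neg_mul, smul_neg]
      rw [c3, c4]
      abel
    · -- (2,1)
      simp only [Matrix.mul_smul, Matrix.smul_mul, smul_smul, Matrix.mul_neg,
        Matrix.neg_mul, smul_neg]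
      rw [c5, c6]
      abel
    · -- (2,2)
      simp only [Matrix.mul_smul, Matrix.smul_mul, smul_smul, Matrix.mul_neg,
        Matrix.neg_mul, smul_neg, neg_neg]
      rw [c7, c8]
      have e : (2 * 2 : ℕ) • (b * b * Q) + b * b * ((1 - Q) * (1 - Q))
          = b * ((b * (1 + Q)) * (1 + Q)) := by
        simp only [nsmul_eq_mul, Nat.reduceMul, Nat.cast_ofNat]; noncomm_ring
      rw [e, hb1, Matrix.one_mul, hb1]
  exact ⟨by rw [hHerm, key], by rw [hHerm, key]⟩
end

section
/- Let S be an n×n unitary Hermitian complex matrix (n ≥ 2) such that every diagonal entry of S equals 2/n − 1 and every off-diagonal entry has modulus 2/n. Then there exist real numbers ξ₂,…,ξₙ such that S = D⁻¹(−I + (2/n)J)D, where D = diag(1, e^{iξ₂},…, e^{iξₙ}) and J is the n×n all-ones matrix. -/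
/-!
Conjugating `S` by the diagonal unitary built from the phases of its first row turns that row
into `(c - 1, c, …, c)` with `c = 2 / n`, and the result `T` is still a Hermitian involution.
Hermitianity makes the first column `c • 𝟙 - e₀`, so `T² = 1` gives `T (c • 𝟙) = c • 𝟙`: every row
of `T` sums to `1`. The off-diagonal entries of a row then sum to `2 - c = (n - 1) c` while each has
modulus `c`, which forces all of them to equal `c`.
-/

open Matrix Complex

theorem Complex.eq_of_norm_le_of_sum_eq_card_mul {ι : Type*} {s : Finset ι} {z : ι → ℂ} {r : ℝ}
    (hz : ∀ k ∈ s, ‖z k‖ ≤ r) (hsum : ∑ k ∈ s, z k = s.card * r) : ∀ k ∈ s, z k = r := by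
  have hgap : ∑ k ∈ s, (r - (z k).re) = 0 := by
    have hre := congrArg re hsum
    simp only [re_sum, mul_re, natCast_re, ofReal_re, natCast_im, ofReal_im, mul_zero,
      sub_zero] at hre
    simp [Finset.sum_sub_distrib, hre]
  have hre_eq := (Finset.sum_eq_zero_iff_of_nonneg fun k hk =>
    sub_nonneg.2 ((re_le_norm _).trans (hz k hk))).1 hgap
  intro k hk
  have hre : (z k).re = r := by linarith [hre_eq k hk]
  have him : 0 = (z k).im :=
    (nonneg_iff.1 (re_eq_norm.1 (le_antisymm (re_le_norm _) (hre ▸ hz k hk)))).2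
  exact Complex.ext (by simp [hre]) (by simp [← him])

theorem Complex.mul_exp_neg_arg_mul_I (z : ℂ) : z * exp (-(arg z * I)) = ‖z‖ := by
  calc z * exp (-(arg z * I)) = ‖z‖ * exp (arg z * I) * exp (-(arg z * I)) := by
        rw [norm_mul_exp_arg_mul_I]
    _ = ‖z‖ := by rw [mul_assoc, ← exp_add, add_neg_cancel, exp_zero, mul_one]

theorem Matrix.mulVec_eq_self_of_mul_self_eq_one {ι R : Type*} [Fintype ι] [DecidableEq ι]
    [Ring R] {T : Matrix ι ι R} (hT : T * T = 1) {e v : ι → R} (he : T *ᵥ e = v - e) :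
    T *ᵥ v = v := by
  have hv : v = T *ᵥ e + e := by rw [he, sub_add_cancel]
  rw [hv, mulVec_add, mulVec_mulVec, hT, one_mulVec, add_comm]

theorem mul_mul_star_mul_self_eq_one {R : Type*} [Monoid R] [StarMul R] {U S : R}
    (hU : U ∈ unitary R) (hS : S * S = 1) : U * S * star U * (U * S * star U) = 1 := by
  calc U * S * star U * (U * S * star U) = U * S * (star U * U) * S * star U := by
        simp only [mul_assoc]
    _ = 1 := by rw [Unitary.star_mul_self_of_mem hU, mul_one, mul_assoc U, hS, mul_one,
        Unitary.mul_star_self_of_mem hU]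

section

variable {ι : Type*} [Fintype ι] [DecidableEq ι]

theorem Matrix.diagonal_mem_unitaryGroup {d : ι → ℂ} (hd : ∀ j, ‖d j‖ = 1) :
    diagonal d ∈ unitaryGroup ι ℂ := by
  rw [mem_unitaryGroup_iff, star_eq_conjTranspose, diagonal_conjTranspose, diagonal_mul_diagonal,
    ← diagonal_one]
  congr 1
  funext j
  simp [mul_conj', hd]

theorem Matrix.diagonal_mul_mul_conjTranspose_diagonal_apply (d : ι → ℂ) (S : Matrix ι ι ℂ)
    (j l : ι) :
    (diagonal d * S * (diagonal d)ᴴ) j l = d j * S j l * star (d l) := by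
  rw [diagonal_conjTranspose, mul_diagonal, diagonal_mul]
  rfl

theorem Matrix.IsHermitian.sum_row_eq_one {T : Matrix ι ι ℂ} (hH : T.IsHermitian) (hT : T * T = 1)
    {c : ℝ} (hc : c ≠ 0) {i₀ : ι} (hdiag : T i₀ i₀ = c - 1) (hrow : ∀ l, l ≠ i₀ → T i₀ l = c)
    (j : ι) : ∑ k, T j k = 1 := by
  have hcol : T *ᵥ Pi.single i₀ 1 = (fun _ => (c : ℂ)) - Pi.single i₀ 1 := by
    funext k
    rw [mulVec_single_one, col_apply, ← hH.apply]
    by_cases hk : k = i₀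
    · subst hk; simp [hdiag]
    · simp [hrow k hk, hk]
  have hconst := congrFun (mulVec_eq_self_of_mul_self_eq_one hT hcol) j
  simp only [mulVec, dotProduct, ← Finset.sum_mul] at hconst
  exact (mul_eq_right₀ (ofReal_ne_zero.2 hc)).1 hconst

theorem Matrix.IsHermitian.eq_neg_one_add_smul_of_mul_self_eq_one {T : Matrix ι ι ℂ}
    (hH : T.IsHermitian) (hT : T * T = 1) {c : ℝ} (hcard : c * Fintype.card ι = 2)
    (hdiag : ∀ j, T j j = c - 1) (hoff : ∀ j l, j ≠ l → ‖T j l‖ ≤ c) {i₀ : ι}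
    (hrow : ∀ l, l ≠ i₀ → T i₀ l = c) : T = -1 + (c : ℂ) • of fun _ _ => 1 := by
  have hc : c ≠ 0 := by rintro rfl; simp at hcard
  ext j l
  by_cases hjl : j = l
  · subst hjl; simp [hdiag, sub_eq_neg_add]
  have hsum : ∑ k ∈ Finset.univ.erase j, T j k = (Finset.univ.erase j).card * c := by
    have hrow_sum := hH.sum_row_eq_one hT hc (hdiag i₀) hrow j
    rw [← Finset.add_sum_erase _ _ (Finset.mem_univ j), hdiag] at hrow_sum
    rw [Finset.card_erase_of_mem (Finset.mem_univ j), Finset.card_univ,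
      Nat.cast_pred (Fintype.card_pos_iff.2 ⟨j⟩)]
    have hcardC : (c : ℂ) * Fintype.card ι = 2 := by exact_mod_cast hcard
    linear_combination hrow_sum - hcardC
  have hjl' := Complex.eq_of_norm_le_of_sum_eq_card_mul
    (fun k hk => hoff j k (Finset.ne_of_mem_erase hk).symm) hsum l
    (Finset.mem_erase.2 ⟨Ne.symm hjl, Finset.mem_univ l⟩)
  simp [hjl, hjl']

end

/-- An n×n unitary Hermitian matrix with all diagonal entries 2/n−1 and all off-diagonal
entries of modulus 2/n is diagonally equivalent to −I + (2/n)J. -/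
theorem stmt_4 (n : ℕ) (hn : 2 ≤ n) (S : Matrix (Fin n) (Fin n) ℂ)
    (hu : S * Sᴴ = 1) (hh : Sᴴ = S)
    (hdiag : ∀ j, S j j = 2 / n - 1)
    (hoff : ∀ j l, j ≠ l → ‖S j l‖ = 2 / n) :
    ∃ ξ : Fin n → ℝ, ξ ⟨0, by omega⟩ = 0 ∧
      S = (Matrix.diagonal fun j => Complex.exp (Complex.I * ξ j))⁻¹
          * (-1 + (2 / n : ℂ) • Matrix.of (fun _ _ => (1 : ℂ)))
          * (Matrix.diagonal fun j => Complex.exp (Complex.I * ξ j)) := by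
  set i₀ : Fin n := ⟨0, by omega⟩
  set ξ : Fin n → ℝ := fun j => if j = i₀ then 0 else (S i₀ j).arg
  set d : Fin n → ℂ := fun j => exp (I * ξ j)
  have hd : ∀ j, ‖d j‖ = 1 := fun j => norm_exp_I_mul_ofReal _
  have hdd : ∀ j, d j * star (d j) = 1 := fun j => by simp [mul_conj', hd]
  have hentry := diagonal_mul_mul_conjTranspose_diagonal_apply d S
  have hD := diagonal_mem_unitaryGroup hd
  set D := diagonal d
  have hc : ((2 / n : ℝ) : ℂ) = 2 / n := by simp
  have hT : D * S * Dᴴ = -1 + (2 / n : ℂ) • of fun _ _ => 1 := by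
    rw [← hc]
    refine IsHermitian.eq_neg_one_add_smul_of_mul_self_eq_one (i₀ := i₀)
      (isHermitian_mul_mul_conjTranspose _ hh) (mul_mul_star_mul_self_eq_one hD (by rwa [hh] at hu))
      (by rw [Fintype.card_fin]; field_simp) (fun j => ?_) (fun j l hjl => ?_) (fun l hl => ?_)
    · rw [hentry, hdiag, hc, mul_right_comm, hdd, one_mul]
    · rw [hentry, norm_mul, norm_mul, norm_star, hd, hd, one_mul, mul_one, hoff j l hjl]
    · have hξ : ξ l = (S i₀ l).arg := if_neg hl
      have hdl : star (d l) = exp (-((S i₀ l).arg * I)) := by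
        simp [d, hξ, ← Complex.exp_conj, mul_comm I]
      rw [hentry, show d i₀ = 1 by simp [d, ξ], one_mul, hdl, mul_exp_neg_arg_mul_I,
        hoff i₀ l (Ne.symm hl)]
  refine ⟨ξ, if_pos rfl, ?_⟩
  rw [inv_eq_left_inv (Unitary.star_mul_self_of_mem hD), ← hT]
  calc S = star D * D * S * (star D * D) := by
        rw [Unitary.star_mul_self_of_mem hD, one_mul, mul_one]
    _ = star D * (D * S * star D) * D := by simp only [mul_assoc]
end

section
/- Let S be an n×n unitary Hermitian complex matrix (n ≥ 2) such that each diagonal entry equals ±(1 − 2/n), every off-diagonal entry has modulus 2/n, and the number p of diagonal entries equal to 1 − 2/n satisfies 1 ≤ p ≤ n − 1. Then n is even and p = n/2. -/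
/-!
Since `S` is Hermitian and `S * S = 1`, its eigenvalues are `±1`, so its trace is `2k - n` for
some natural number `k`. Reading the trace off the diagonal instead gives
`(2p - n)(1 - 2/n)`. Equating the two yields `2p = n (p + 1 - k)`, so `n ∣ 2p`, and
`0 < 2p < 2n` forces `2p = n`.
-/

open Finset Matrix Complex

theorem Fintype.sum_eq_zsmul_of_forall_eq_or_eq_neg {ι M : Type*} [Fintype ι] [AddCommGroup M]
    (f : ι → M) (c : M) [DecidablePred (f · = c)] (h : ∀ i, f i = c ∨ f i = -c) :
    ∑ i, f i = (2 * #{i | f i = c} - Fintype.card ι : ℤ) • c := by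
  have hpos : ∑ i with f i = c, f i = ∑ i with f i = c, c :=
    Finset.sum_congr rfl fun i hi => (mem_filter.mp hi).2
  have hneg : ∑ i with ¬f i = c, f i = ∑ i with ¬f i = c, -c :=
    Finset.sum_congr rfl fun i hi => (h i).resolve_left (mem_filter.mp hi).2
  rw [← sum_filter_add_sum_filter_not univ (f · = c), hpos, hneg, sum_const, sum_const,
    ← card_univ, ← card_filter_add_card_filter_not (s := univ) (f · = c)]
  push_cast
  module

namespace Matrix.IsHermitian

variable {𝕜 n : Type*} [RCLike 𝕜] [Fintype n] [DecidableEq n] {A : Matrix n n 𝕜}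

theorem eigenvalues_eq_one_or_eq_neg_one_of_mul_self_eq_one (hA : A.IsHermitian)
    (hA2 : A * A = 1) (i : n) : hA.eigenvalues i = 1 ∨ hA.eigenvalues i = -1 := by
  set v := ⇑(hA.eigenvectorBasis i)
  have hv : v ≠ 0 := (WithLp.ofLp_eq_zero 2).ne.2 <| hA.eigenvectorBasis.orthonormal.ne_zero i
  have hsq : (hA.eigenvalues i * hA.eigenvalues i) • v = (1 : ℝ) • v := by
    calc (hA.eigenvalues i * hA.eigenvalues i) • v = (A * A) *ᵥ v := by
          rw [← mulVec_mulVec, hA.mulVec_eigenvectorBasis, mulVec_smul,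
            hA.mulVec_eigenvectorBasis, smul_smul]
      _ = (1 : ℝ) • v := by rw [hA2, one_mulVec, one_smul]
  exact mul_self_eq_one_iff.mp (smul_left_injective ℝ hv hsq)

theorem exists_trace_eq_of_mul_self_eq_one (hA : A.IsHermitian) (hA2 : A * A = 1) :
    ∃ k : ℕ, A.trace = ((2 * k - Fintype.card n : ℤ) : 𝕜) := by
  classical
  refine ⟨#{i | (hA.eigenvalues i : 𝕜) = 1}, ?_⟩
  rw [hA.trace_eq_sum_eigenvalues, Fintype.sum_eq_zsmul_of_forall_eq_or_eq_neg _ 1,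
    zsmul_one]
  intro i
  rcases hA.eigenvalues_eq_one_or_eq_neg_one_of_mul_self_eq_one hA2 i with h | h <;>
    simp [h]

end Matrix.IsHermitian

theorem stmt_6_general (n : ℕ) (S : Matrix (Fin n) (Fin n) ℂ)
    (hu : S * Sᴴ = 1) (hh : Sᴴ = S)
    (hdiag : ∀ j, S j j = 1 - 2 / n ∨ S j j = 2 / n - 1)
    (p : ℕ) (hp : p = (Finset.univ.filter fun j => S j j = 1 - 2 / n).card)
    (hp1 : 1 ≤ p) (hp2 : p ≤ n - 1) :
    Even n ∧ 2 * p = n := by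
  have hdiag_trace : S.trace = (2 * p - n : ℤ) • (1 - 2 / n : ℂ) := by
    have h := Fintype.sum_eq_zsmul_of_forall_eq_or_eq_neg (fun j => S j j) (1 - 2 / n)
      fun j => by rw [neg_sub]; exact hdiag j
    rwa [Fintype.card_fin, ← hp] at h
  have hS : S.IsHermitian := hh
  obtain ⟨k, hk⟩ := hS.exists_trace_eq_of_mul_self_eq_one (by rwa [hh] at hu)
  have hn0 : (n : ℂ) ≠ 0 := Nat.cast_ne_zero.mpr (by omega)
  have hkey : ((2 * p : ℤ) : ℂ) = ((n * (p + 1 - k) : ℤ) : ℂ) := by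
    rw [hdiag_trace, Fintype.card_fin, zsmul_eq_mul] at hk
    field_simp at hk
    push_cast at hk ⊢
    linear_combination -hk / 2
  have hdvd : n ∣ 2 * p := Int.natCast_dvd_natCast.mp ⟨_, by exact_mod_cast hkey⟩
  have htwo : 2 * p = n := Nat.eq_of_dvd_of_lt_two_mul (by omega) hdvd (by omega)
  exact ⟨⟨p, by omega⟩, htwo⟩

/-- If S is n×n unitary Hermitian with diagonal entries ±(1−2/n), off-diagonal entries of
modulus 2/n, and the number p of diagonal entries equal to 1−2/n satisfies 1 ≤ p ≤ n−1,
then n is even and p = n/2. -/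
theorem stmt_6 (n : ℕ) (hn : 2 ≤ n) (S : Matrix (Fin n) (Fin n) ℂ)
    (hu : S * Sᴴ = 1) (hh : Sᴴ = S)
    (hdiag : ∀ j, S j j = 1 - 2 / n ∨ S j j = 2 / n - 1)
    (hoff : ∀ j l, j ≠ l → ‖S j l‖ = 2 / n)
    (p : ℕ) (hp : p = (Finset.univ.filter fun j => S j j = 1 - 2 / n).card)
    (hp1 : 1 ≤ p) (hp2 : p ≤ n - 1) :
    Even n ∧ 2 * p = n :=
  stmt_6_general n S hu hh hdiag p hp hp1 hp2
end

section
/- Let n ≥ 2, m = 1, and T = (e^{iξ₂}, …, e^{iξₙ}) a row vector of unimodular entries. Then the block scattering matrix S with blocks (1+TT†)⁻¹(1−TT†), (1+TT†)⁻¹·2T, (I+T†T)⁻¹·2T†, −(I+T†T)⁻¹(I−T†T) equals D†(−I + (2/n)J)D, where D = diag(1, e^{iξ₂},…, e^{iξₙ}) and J is the n×n all-ones matrix. -/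
/-! Since the entries of `T` are unimodular, `T Tᴴ = n - 1` is a scalar, so `(1 + T Tᴴ)⁻¹ = 1 / n`
and, by the push-through identity, `(1 + Tᴴ T)⁻¹ = 1 - Tᴴ T / n`. Every block of the scattering
matrix is then the corresponding block of `-1 + (2 / n) vᴴ v` with `v = (1, T)`. On the other side,
conjugating `J = 𝟙ᵀ 𝟙` by the unitary diagonal matrix `D = diag v` gives `vᴴ v` as well. -/

open Matrix Complex

namespace Matrix

variable {K : Type*} [Field K] {m k ι : Type*}

section PushThrough

variable [Fintype m] [Fintype k] [DecidableEq m] {A : Matrix m k K}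
  {B : Matrix k m K} {c : K}

theorem mul_mul_eq_smul_of_mul_eq_smul_one (hAB : A * B = c • 1) : B * A * B = c • B := by
  rw [Matrix.mul_assoc, hAB, Matrix.mul_smul, Matrix.mul_one]

theorem inv_one_add_mul_of_mul_eq_smul_one (hAB : A * B = c • 1) (hc : 1 + c ≠ 0) :
    (1 + A * B)⁻¹ = (1 + c)⁻¹ • 1 := by
  refine inv_eq_left_inv ?_
  rw [hAB, Matrix.smul_mul, Matrix.one_mul]
  match_scalars
  field_simp

theorem inv_one_add_mul_swap_of_mul_eq_smul_one [DecidableEq k] (hAB : A * B = c • 1) (hc : 1 + c ≠ 0) :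
    (1 + B * A)⁻¹ = 1 - (1 + c)⁻¹ • (B * A) := by
  refine inv_eq_right_inv ?_
  have hsq : B * A * (B * A) = c • (B * A) := by
    rw [← Matrix.mul_assoc, mul_mul_eq_smul_of_mul_eq_smul_one hAB, Matrix.smul_mul]
  simp only [add_mul, mul_sub, one_mul, mul_one, Matrix.mul_smul, hsq, smul_smul]
  match_scalars <;> field_simp; ring

end PushThrough

variable [StarRing K]

noncomputable def scatteringMatrix [Fintype m] [Fintype k] [DecidableEq m] [DecidableEq k]
    (T : Matrix m k K) : Matrix (m ⊕ k) (m ⊕ k) K :=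
  fromBlocks ((1 + T * Tᴴ)⁻¹ * (1 - T * Tᴴ)) ((1 + T * Tᴴ)⁻¹ * (2 • T))
    ((1 + Tᴴ * T)⁻¹ * (2 • Tᴴ)) (-((1 + Tᴴ * T)⁻¹ * (1 - Tᴴ * T)))

theorem scatteringMatrix_eq_of_mul_conjTranspose_eq_smul_one [Fintype m] [Fintype k]
    [DecidableEq m] [DecidableEq k] {T : Matrix m k K} {c : K} (hT : T * Tᴴ = c • 1)
    (hc : 1 + c ≠ 0) :
    scatteringMatrix T = -1 + (2 / (1 + c)) • fromBlocks 1 T Tᴴ (Tᴴ * T) := by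
  have hTTT := mul_mul_eq_smul_of_mul_eq_smul_one hT
  have hsq : Tᴴ * T * (Tᴴ * T) = c • (Tᴴ * T) := by
    rw [← Matrix.mul_assoc, hTTT, Matrix.smul_mul]
  rw [scatteringMatrix, inv_one_add_mul_of_mul_eq_smul_one hT hc,
    inv_one_add_mul_swap_of_mul_eq_smul_one hT hc, hT, ← fromBlocks_one, fromBlocks_smul,
    fromBlocks_neg, fromBlocks_add, fromBlocks_inj]
  simp only [neg_zero, zero_add, Matrix.smul_mul, Matrix.mul_smul, Matrix.one_mul, Matrix.sub_mul,
    Matrix.mul_sub, Matrix.mul_one, Matrix.mul_add, two_smul, hsq, hTTT, smul_smul]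
  refine ⟨?_, ?_, ?_, ?_⟩ <;> match_scalars <;> field_simp <;> ring

theorem conjTranspose_diagonal_mul_neg_one_add_smul_ones_mul_diagonal [Fintype ι]
    [DecidableEq ι] {d : ι → K} (hd : ∀ i, star (d i) * d i = 1) (s : K) :
    (diagonal d)ᴴ * (-1 + s • of fun _ _ => (1 : K)) * diagonal d =
      -1 + s • vecMulVec (star d) d := by
  ext i j
  simp only [diagonal_conjTranspose, mul_diagonal, diagonal_mul, add_apply, neg_apply, one_apply,
    smul_apply, of_apply, vecMulVec_apply, Pi.star_apply, smul_eq_mul, mul_one]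
  split_ifs with hij
  · subst hij
    linear_combination -hd i
  · ring

variable [Unique m] [DecidableEq m]

theorem vecMulVec_star_sumElim_one (t : k → K) :
    vecMulVec (star (Sum.elim (fun _ : m => 1) t)) (Sum.elim (fun _ => 1) t) =
      fromBlocks 1 (replicateRow m t) (replicateRow m t)ᴴ
        ((replicateRow m t)ᴴ * replicateRow m t) := by
  ext (i | i) (j | j)
  · simp [vecMulVec_apply, Subsingleton.elim i j]
  all_goals simp [vecMulVec_apply, mul_apply]

theorem replicateRow_mul_conjTranspose_of_star_mul_self [Fintype k] {t : k → K}
    (ht : ∀ j, star (t j) * t j = 1) :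
    replicateRow m t * (replicateRow m t)ᴴ = (Fintype.card k : K) • 1 := by
  ext i i'
  simp [mul_apply, Subsingleton.elim i i', mul_comm (t _), ht]

end Matrix

/-- For m = 1 and T = (e^{iξ₂},…,e^{iξₙ}), the scattering matrix equals
Dᴴ(−I + (2/n)J)D with D = diag(1, e^{iξ₂},…, e^{iξₙ}). -/
theorem stmt_8 (n : ℕ) (hn : 2 ≤ n) (ξ : Fin (n - 1) → ℝ)
    (T : Matrix (Fin 1) (Fin (n - 1)) ℂ)
    (hT : T = Matrix.of fun _ j => Complex.exp (Complex.I * ξ j))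
    (D : Matrix (Fin 1 ⊕ Fin (n - 1)) (Fin 1 ⊕ Fin (n - 1)) ℂ)
    (hD : D = Matrix.diagonal (Sum.elim (fun _ => 1)
      (fun j => Complex.exp (Complex.I * ξ j)))) :
    (Matrix.fromBlocks
      ((1 + T * Tᴴ)⁻¹ * (1 - T * Tᴴ))
      ((1 + T * Tᴴ)⁻¹ * (2 • T))
      ((1 + Tᴴ * T)⁻¹ * (2 • Tᴴ))
      (-((1 + Tᴴ * T)⁻¹ * (1 - Tᴴ * T)))
      : Matrix (Fin 1 ⊕ Fin (n - 1)) (Fin 1 ⊕ Fin (n - 1)) ℂ)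
    = Dᴴ * (-1 + (2 / n : ℂ) • Matrix.of (fun _ _ => (1 : ℂ))) * D := by
  subst hT hD
  set t : Fin (n - 1) → ℂ := fun j => exp (I * ξ j)
  have ht : ∀ j, star (t j) * t j = 1 := fun j => by
    rw [RCLike.star_def, RCLike.conj_mul, norm_exp_I_mul_ofReal]
    simp
  have hd : ∀ i, star (Sum.elim (fun _ : Fin 1 => 1) t i) * Sum.elim (fun _ => 1) t i = 1 := by
    rintro (i | j)
    · simp
    · exact ht j
  have hc : 1 + (Fintype.card (Fin (n - 1)) : ℂ) = n := by
    rw [Fintype.card_fin, Nat.cast_sub (by omega)]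
    ring
  rw [conjTranspose_diagonal_mul_neg_one_add_smul_ones_mul_diagonal hd,
    vecMulVec_star_sumElim_one, ← hc]
  exact scatteringMatrix_eq_of_mul_conjTranspose_eq_smul_one
    (replicateRow_mul_conjTranspose_of_star_mul_self ht) (hc ▸ Nat.cast_ne_zero.2 (by omega))
end

section
/- Let S be an n×n unitary Hermitian matrix whose diagonal entries all have modulus 1 − 2/n and whose off-diagonal entries all have modulus 2/n, with n ≥ 3. Suppose all diagonal entries equal 2/n − 1. Then for the diagonal matrix D = diag(1, e^{iα₁₂}, …, e^{iα₁ₙ}), where S₁ⱼ = (2/n)e^{iα₁ⱼ}, the conjugated matrix Ŝ = D S D⁻¹ has all off-diagonal entries equal to exactly 2/n. -/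
open Matrix Complex

open Finset in
lemma stmt16_key (n : ℕ) (hn : 3 ≤ n) (S : Matrix (Fin n) (Fin n) ℂ)
    (hsq : S * S = 1)
    (hdiag : ∀ j, S j j = 2 / n - 1)
    (hoff : ∀ j l, j ≠ l → ‖S j l‖ = 2 / n)
    {j l k : Fin n} (hjl : j ≠ l) (hkj : k ≠ j) (hkl : k ≠ l) :
    S j k * S k l = (2 / n : ℂ) * S j l := by
  have hn3 : (3:ℝ) ≤ (n:ℝ) := by exact_mod_cast hn
  have hnpos : (0:ℝ) < n := by linarith
  set r : ℝ := 2 / n with hr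
  clear_value r
  have hrpos : 0 < r := by rw [hr]; positivity
  set t : ℝ := 2 * (1 - r) with ht
  clear_value t
  have htpos : 0 < t := by
    have : r < 1 := by rw [hr, div_lt_one hnpos]; linarith
    rw [ht]; linarith
  have hsum : ∑ m, S j m * S m l = 0 := by
    have := congrFun (congrFun hsq j) l
    simpa [Matrix.mul_apply, Matrix.one_apply, hjl] using this
  set s : Finset (Fin n) := Finset.univ \ {j, l} with hs
  set c : ℂ := (t : ℂ) * S j l with hc
  clear_value c
  have hcard : s.card = n - 2 := by
    rw [hs, Finset.card_sdiff_of_subset (Finset.subset_univ _), Finset.card_univ, Fintype.card_fin]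
    simp [Finset.card_insert_of_notMem, hjl]
  have hsum2 : ∑ m ∈ s, S j m * S m l = c := by
    have hsplit := Finset.sum_sdiff (f := fun m => S j m * S m l)
      (Finset.subset_univ ({j, l} : Finset (Fin n)))
    rw [hsum] at hsplit
    have hpair : ∑ m ∈ ({j, l} : Finset (Fin n)), S j m * S m l
        = 2 * (2 / n - 1) * S j l := by
      rw [Finset.sum_pair hjl, hdiag, hdiag]; ring
    rw [hpair] at hsplit
    rw [hc, ht, hr]
    push_cast
    linear_combination hsplit
  have habsjl : ‖S j l‖ = r := hoff j l hjl
  have habsc : ‖c‖ = t * r := by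
    rw [hc, norm_mul, Complex.norm_real, Real.norm_eq_abs, abs_of_pos htpos, habsjl]
  have hcne : c ≠ 0 := by
    rw [hc]
    apply mul_ne_zero
    · exact_mod_cast ne_of_gt (by exact_mod_cast htpos : (0:ℝ) < t)
    · intro h
      rw [h, norm_zero] at habsjl; exact absurd habsjl.symm (ne_of_gt hrpos)
  have hble : ∀ m ∈ s, ((starRingEnd ℂ) c * (S j m * S m l)).re ≤ (t * r) * r ^ 2 := by
    intro m hm
    rw [hs, Finset.mem_sdiff, Finset.mem_insert, Finset.mem_singleton] at hm
    push_neg at hm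
    have h1 : ‖S j m‖ = r := hoff j m (fun h => hm.2.1 h.symm)
    have h2 : ‖S m l‖ = r := hoff m l hm.2.2
    calc ((starRingEnd ℂ) c * (S j m * S m l)).re
        ≤ ‖(starRingEnd ℂ) c * (S j m * S m l)‖ := Complex.re_le_norm _
      _ = (t * r) * r ^ 2 := by
          rw [norm_mul, norm_mul, Complex.norm_conj, habsc, h1, h2]; ring
  have hbsum : ∑ m ∈ s, ((starRingEnd ℂ) c * (S j m * S m l)).re
      = ∑ m ∈ s, (t * r) * r ^ 2 := by
    have hre : ∑ m ∈ s, ((starRingEnd ℂ) c * (S j m * S m l)).re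
        = ((starRingEnd ℂ) c * c).re := by
      rw [← Complex.re_sum]
      congr 1
      rw [← Finset.mul_sum, hsum2]
    have hcc : ((starRingEnd ℂ) c * c).re = (t * r) ^ 2 := by
      rw [Complex.conj_mul']
      rw [habsc]
      norm_cast
    rw [hre, hcc, Finset.sum_const, hcard, nsmul_eq_mul]
    have hn2 : ((n - 2 : ℕ) : ℝ) = (n : ℝ) - 2 := by
      push_cast [Nat.cast_sub (by omega : 2 ≤ n)]; ring
    have hne : (n:ℝ) ≠ 0 := ne_of_gt hnpos
    rw [hn2, ht, hr]
    field_simp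
  have heach := (Finset.sum_eq_sum_iff_of_le hble).mp hbsum k
    (by rw [hs, Finset.mem_sdiff]; simp [hkj, hkl])
  set z : ℂ := (starRingEnd ℂ) c * (S j k * S k l) with hz
  clear_value z
  have habsz : ‖z‖ = (t * r) * r ^ 2 := by
    rw [hz, norm_mul, norm_mul, Complex.norm_conj, habsc,
      hoff j k (fun h => hkj h.symm), hoff k l hkl]; ring
  have hzre : z.re = ‖z‖ := by rw [habsz]; exact heach
  have him : z.im = 0 := by
    have h1 := Complex.sq_norm z
    rw [Complex.normSq_apply, ← hzre] at h1
    nlinarith [sq_nonneg z.im]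
  have hzeq : z = (((t * r) * r ^ 2 : ℝ) : ℂ) := by
    rw [← habsz, ← hzre]
    exact Complex.ext (by simp) (by simp [him])
  have hgoal : (starRingEnd ℂ) c * (S j k * S k l)
      = (starRingEnd ℂ) c * ((2 / n : ℂ) * S j l) := by
    rw [← hz, hzeq]

    have hmc : (starRingEnd ℂ) (S j l) * S j l = ((r ^ 2 : ℝ) : ℂ) := by
      rw [Complex.conj_mul', habsjl]
      simp [← Complex.ofReal_pow]
    have h2n : (2 / (n:ℂ)) = ((r:ℝ):ℂ) := by rw [hr]; push_cast; ring
    rw [h2n, hc, _root_.map_mul, Complex.conj_ofReal]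
    calc (((t * r) * r ^ 2 : ℝ) : ℂ)
        = (t:ℂ) * ((r:ℝ):ℂ) * ((r^2:ℝ):ℂ) := by push_cast; ring
      _ = (t:ℂ) * ((r:ℝ):ℂ) * ((starRingEnd ℂ) (S j l) * S j l) := by rw [hmc]
      _ = (t:ℂ) * (starRingEnd ℂ) (S j l) * (((r:ℝ):ℂ) * S j l) := by ring
  exact mul_left_cancel₀ (by simpa using hcne) hgoal

/-- If S is unitary Hermitian with all diagonal entries 2/n−1 and off-diagonal entries of
modulus 2/n, then conjugating by D = diag(1, e^{iα₁₂},…,e^{iα₁ₙ}) (where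
S₁ⱼ = (2/n)e^{iα₁ⱼ}) makes all off-diagonal entries equal to exactly 2/n. -/
theorem stmt_16 (n : ℕ) (hn : 3 ≤ n) (S : Matrix (Fin n) (Fin n) ℂ)
    (hu : S * Sᴴ = 1) (hh : Sᴴ = S)
    (hdiag : ∀ j, S j j = 2 / n - 1)
    (hoff : ∀ j l, j ≠ l → ‖S j l‖ = 2 / n)
    (D : Matrix (Fin n) (Fin n) ℂ)
    (hD : D = Matrix.diagonal fun j =>
      if j = (⟨0, by omega⟩ : Fin n) then 1 else S ⟨0, by omega⟩ j * (n / 2 : ℂ)) :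
    ∀ j l, j ≠ l → (D * S * D⁻¹) j l = 2 / n := by
  intro j l hjl
  have hsq : S * S = 1 := by rw [hh] at hu; exact hu
  have hnc : (n:ℂ) ≠ 0 := Nat.cast_ne_zero.mpr (by omega)
  set z0 : Fin n := ⟨0, by omega⟩ with hz0
  have hconj : ∀ a b, (starRingEnd ℂ) (S a b) = S b a := by
    intro a b
    have := congrFun (congrFun hh b) a
    rw [Matrix.conjTranspose_apply] at this
    exact this
  have habs2 : ∀ m, m ≠ z0 → S z0 m * (starRingEnd ℂ) (S z0 m)
      = (2/(n:ℂ)) * (2/(n:ℂ)) := by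
    intro m hm
    rw [Complex.mul_conj, Complex.normSq_eq_norm_sq, hoff z0 m (Ne.symm hm)]
    push_cast
    ring
  set Dinv := Matrix.diagonal (fun m => if m = z0 then 1
    else (starRingEnd ℂ) (S z0 m) * ((n:ℂ)/2)) with hDinv
  have hright : D * Dinv = 1 := by
    rw [hD, hDinv, Matrix.diagonal_mul_diagonal]
    have : (fun m => (if m = z0 then 1 else S z0 m * ((n:ℂ) / 2)) *
        (if m = z0 then 1 else (starRingEnd ℂ) (S z0 m) * ((n:ℂ)/2))) = fun _ => (1:ℂ) := by
      funext m
      by_cases hm : m = z0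
      · simp [hm]
      · simp only [hm, if_false]
        have h := habs2 m hm
        field_simp at h ⊢
        linear_combination h
    rw [this, Matrix.diagonal_one]
  have hDeq : D⁻¹ = Dinv := Matrix.inv_eq_right_inv hright
  rw [hDeq, hD, hDinv]
  simp only [Matrix.diagonal_mul, Matrix.mul_diagonal]
  by_cases hj : j = z0
  · have hl : l ≠ z0 := by rw [← hj]; exact (Ne.symm hjl)
    simp only [hj, if_pos rfl, hl, if_false, if_true]
    have h := habs2 l hl
    field_simp at h ⊢
    linear_combination h
  · by_cases hl : l = z0
    · simp only [hj, if_false, hl, if_pos rfl, if_true]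
      have h := habs2 j hj
      rw [hconj] at h
      field_simp at h ⊢
      linear_combination h
    · simp only [hj, hl, if_false]
      have hkey := stmt16_key n hn S hsq hdiag hoff hjl
        (fun h => hj h.symm) (fun h => hl h.symm)
      rw [← hconj z0 j] at hkey
      have haj := habs2 j hj
      have hal := habs2 l hl
      have hx : S j l = ((n:ℂ)/2) * ((starRingEnd ℂ) (S z0 j) * S z0 l) := by
        field_simp at hkey ⊢
        linear_combination -hkey
      rw [hx]
      field_simp at haj hal ⊢
      linear_combination ((S z0 l) * (starRingEnd ℂ) (S z0 l) * (n:ℂ)^2) * haj + 4 * hal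
end

section
/- For n ≥ 2 and even n, the matrix S = [[I−(2/n)J, (2/n)J],[(2/n)J, −I+(2/n)J]], where each block is (n/2)×(n/2) and J is the all-ones block, is unitary and Hermitian. Moreover, for 1 ≤ p ≤ n−1 with p ≠ n/2, the analogous block matrix with blocks of sizes p and n−p is not unitary. -/
open Matrix

/-- The n×n block matrix with blocks of sizes p and q = n−p:
[[I−(2/n)J, (2/n)J],[(2/n)J, −I+(2/n)J]]. -/
noncomputable def Sblock (n p q : ℕ) : Matrix (Fin p ⊕ Fin q) (Fin p ⊕ Fin q) ℂ :=
  Matrix.fromBlocks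
    (1 - (2 / n : ℂ) • Matrix.of fun _ _ => 1)
    ((2 / n : ℂ) • Matrix.of fun _ _ => 1)
    ((2 / n : ℂ) • Matrix.of fun _ _ => 1)
    (-1 + (2 / n : ℂ) • Matrix.of fun _ _ => 1)

lemma Sherm (n p q : ℕ) : (Sblock n p q)ᴴ = Sblock n p q := by
  ext i j
  cases i <;> cases j <;>
    simp [Sblock, conjTranspose_apply, fromBlocks, one_apply, eq_comm]

lemma Sprod (n p q : ℕ) : Sblock n p q * Sblock n p q =
  Matrix.fromBlocks
    (1 + ((2/n:ℂ)^2*((p:ℂ)+q) - 2*(2/n)) • Matrix.of fun _ _ => 1)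
    (((2/n:ℂ)^2*((q:ℂ)-p)) • Matrix.of fun _ _ => 1)
    (((2/n:ℂ)^2*((q:ℂ)-p)) • Matrix.of fun _ _ => 1)
    (1 + ((2/n:ℂ)^2*((p:ℂ)+q) - 2*(2/n)) • Matrix.of fun _ _ => 1) := by
  ext i j
  cases i <;> cases j <;>
    simp [Sblock, fromBlocks, mul_apply, Fintype.sum_sum_type, one_apply, sub_mul,
      mul_sub, Finset.sum_sub_distrib, Finset.sum_ite_eq, Finset.sum_ite_eq',
      add_mul, mul_add, Finset.sum_add_distrib, Finset.mul_sum] <;>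
    (try split) <;> ring

/-- For even n = 2m, the matrix Sblock n m m is unitary and Hermitian; for block sizes
p, n−p with 1 ≤ p ≤ n−1 and p ≠ n/2, the analogous matrix is not unitary. -/
theorem stmt_17 (n m : ℕ) (hm : 1 ≤ m) (hn : n = 2 * m) :
    (Sblock n m m * (Sblock n m m)ᴴ = 1 ∧ (Sblock n m m)ᴴ * Sblock n m m = 1 ∧
      (Sblock n m m)ᴴ = Sblock n m m) ∧
    ∀ p, 1 ≤ p → p ≤ n - 1 → p ≠ m →
      ¬ (Sblock n p (n - p) * (Sblock n p (n - p))ᴴ = 1) := by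
  have hn0 : (n : ℂ) ≠ 0 := by
    have : n ≠ 0 := by omega
    exact_mod_cast Nat.cast_ne_zero.mpr this
  have hc : (2 / n : ℂ) ≠ 0 := div_ne_zero two_ne_zero hn0
  have key : Sblock n m m * Sblock n m m = 1 := by
    rw [Sprod]
    have h1 : ((2/n:ℂ)^2*((m:ℂ)+m) - 2*(2/n)) = 0 := by
      have hmn : ((m:ℂ) + m) = n := by
        rw [hn]; push_cast; ring
      rw [hmn]
      field_simp
      ring
    have h2 : ((2/n:ℂ)^2*((m:ℂ)-m)) = 0 := by ring_nf
    rw [h1, h2]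
    simp [← fromBlocks_one]
  refine ⟨⟨by rw [Sherm]; exact key, by rw [Sherm]; exact key, Sherm n m m⟩, ?_⟩
  intro p hp hpn hpm hcontra
  rw [Sherm, Sprod] at hcontra
  have hq : 1 ≤ n - p := by omega
  have := congrFun (congrFun hcontra (Sum.inl ⟨0, hp⟩)) (Sum.inr ⟨0, hq⟩)
  simp [fromBlocks, one_apply] at this
  rcases this with h | h
  · omega
  · have : ((n - p : ℕ) : ℂ) = (p : ℕ) := by linear_combination h
    have hnat : n - p = p := by exact_mod_cast this
    omega
end
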